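/- arXiv:2501.10331 — 2 statements merged into one kernel-verified Lean document; each statement's English description precedes it below -/
import Mathlib

section
/- For every $\alpha \in [0,1)$ there exists a constant $C = C(\alpha) > 0$ such that for all $a, b : \mathbb{Z}^3 \to \mathbb{C}$ with $N_{1/2+\alpha}(a), N_{3/2+\alpha}(a), N_{1/2+\alpha}(b), N_{3/2+\alpha}(b)$ all finite, one has $N_{1/2+\alpha}(a*b) \le C \, N_{1/2+\alpha}(a)^{(1+\alpha)/2} \, N_{3/2+\alpha}(a)^{(1-\alpha)/2} \, N_{1/2+\alpha}(b)^{(1+\alpha)/2} \, N_{3/2+\alpha}(b)^{(1-\alpha)/2}$. -/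
open scoped ENNReal NNReal BigOperators

/-- The Sobolev-type weighted `ℓ²` norm `N_s(a) = (∑_{n ∈ ℤ³} (1+|n|²)^s ‖a(n)‖²)^{1/2}`,
valued in `ℝ≥0∞`. -/
noncomputable def Ns {E : Type*} [NormedAddCommGroup E] (s : ℝ) (a : (Fin 3 → ℤ) → E) : ℝ≥0∞ :=
  (∑' n : Fin 3 → ℤ,
    ENNReal.ofReal ((1 + ∑ i, ((n i : ℝ)) ^ 2) ^ s * ‖a n‖ ^ 2)) ^ (1 / 2 : ℝ)

/-- Convolution of two sequences on `ℤ³`. -/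
noncomputable def conv (a b : (Fin 3 → ℤ) → ℂ) (n : Fin 3 → ℤ) : ℂ :=
  ∑' m : Fin 3 → ℤ, a m * b (n - m)

/-!
Write `W m = 1 + |m|²` and `p = 1 + α/2`, so that `2p - 3/2 = 1/2 + α`. Cauchy–Schwarz with the
weight `W(m)^p W(n-m)^p` bounds `W(n)^{1/2+α} |(a*b)(n)|²` by
`W(n)^{1/2+α} (∑ₘ W(m)^{-p} W(n-m)^{-p}) · ∑ₘ W(m)^p |a m|² W(n-m)^p |b(n-m)|²`.
The lattice kernel `∑ₘ W(m)^{-p} W(n-m)^{-p}` is `O(W(n)^{3/2-2p})`: by symmetry one may assume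
`|m| ≲ |n-m|`, and then either `|m| ≲ |n|`, where `W(n-m) ≳ W(n)` and `∑_{|m| ≲ |n|} W(m)^{-p}`
grows like `|n|^{3-2p}`, or `|m| ≳ |n|`, where the summand is at most `W(m)^{-2p}`, whose tail
beyond `|n|` is `O(|n|^{3-4p})`; both counts use that the cube shell of radius `j` has `O(j²)`
points. Summing over `n` gives `N_{1/2+α}(a*b)² ≲ N_p(a)² N_p(b)²`, and since
`p = θ (1/2+α) + (1-θ) (3/2+α)` with `θ = (1+α)/2`, Hölder's inequality interpolates `N_p`
between `N_{1/2+α}` and `N_{3/2+α}`.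
-/

open Finset

local notation "ℤ³" => Fin 3 → ℤ

namespace ENNReal
variable {ι : Type*}

theorem tsum_rpow_mul_rpow_le {p q : ℝ} (hp : 0 ≤ p) (hq : 0 ≤ q) (hpq : p + q = 1)
    (f g : ι → ℝ≥0∞) :
    ∑' i, f i ^ p * g i ^ q ≤ (∑' i, f i) ^ p * (∑' i, g i) ^ q := by
  let _ : MeasurableSpace ι := ⊤
  simpa only [MeasureTheory.lintegral_count] using
    lintegral_mul_norm_pow_le (μ := (.count : MeasureTheory.Measure ι))
      Measurable.of_discrete.aemeasurable Measurable.of_discrete.aemeasurable hp hq hpq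

theorem tsum_sq_le_tsum_inv_mul_tsum (c x : ι → ℝ≥0∞) (hc₀ : ∀ i, c i ≠ 0) (hc : ∀ i, c i ≠ ⊤) :
    (∑' i, x i) ^ 2 ≤ (∑' i, (c i)⁻¹) * ∑' i, c i * x i ^ 2 := by
  have hx : ∀ i, x i = (c i)⁻¹ ^ (2⁻¹ : ℝ) * (c i * x i ^ 2) ^ (2⁻¹ : ℝ) := fun i => by
    rw [← mul_rpow_of_nonneg _ _ (by norm_num), ENNReal.inv_mul_cancel_left (hc₀ i) (hc i)]
    simpa using (pow_rpow_inv_natCast two_ne_zero (x i)).symm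
  have hsq : ∀ y : ℝ≥0∞, (y ^ (2⁻¹ : ℝ)) ^ 2 = y := fun y => by
    simpa using rpow_inv_natCast_pow two_ne_zero y
  calc (∑' i, x i) ^ 2
      ≤ ((∑' i, (c i)⁻¹) ^ (2⁻¹ : ℝ) * (∑' i, c i * x i ^ 2) ^ (2⁻¹ : ℝ)) ^ 2 := by
        rw [tsum_congr hx]
        gcongr
        exact tsum_rpow_mul_rpow_le (by norm_num) (by norm_num) (by norm_num) _ _
    _ = _ := by rw [mul_pow, hsq, hsq]

theorem tsum_tsum_mul_sub {G : Type*} [AddGroup G] (u v : G → ℝ≥0∞) :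
    ∑' n, ∑' m, u m * v (n - m) = (∑' m, u m) * ∑' k, v k := by
  rw [ENNReal.tsum_comm, ← ENNReal.tsum_mul_right]
  refine tsum_congr fun m => ?_
  rw [ENNReal.tsum_mul_left]
  exact congrArg _ ((Equiv.subRight m).tsum_eq v)

end ENNReal

lemma Real.rpow_neg_le_mul_rpow_neg {x y c p : ℝ} (hx : 0 < x) (hc : 0 < c) (hp : 0 ≤ p)
    (h : x ≤ c * y) : y ^ (-p) ≤ c ^ p * x ^ (-p) := by
  have hxc : x / c ≤ y := by rwa [div_le_iff₀' hc]
  calc y ^ (-p) ≤ (x / c) ^ (-p) := Real.rpow_le_rpow_of_nonpos (by positivity) hxc (by linarith)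
    _ = c ^ p * x ^ (-p) := by
      rw [Real.div_rpow hx.le hc.le, Real.rpow_neg hc.le, div_inv_eq_mul, mul_comm]

/-- A lattice substitute for `(1 + |m|²)^{1/2}` whose level sets are cube shells. -/
def supBracket (m : ℤ³) : ℕ := univ.sup (fun i => (m i).natAbs) + 1

lemma supBracket_pos (m : ℤ³) : 0 < supBracket m := Nat.succ_pos _

lemma supBracket_add_le (m k : ℤ³) : supBracket (m + k) ≤ supBracket m + supBracket k := by
  have : univ.sup (fun i => (m i + k i).natAbs)
      ≤ univ.sup (fun i => (m i).natAbs) + univ.sup (fun i => (k i).natAbs) :=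
    Finset.sup_le fun i hi => (Int.natAbs_add_le _ _).trans
      (add_le_add (le_sup (f := fun i => (m i).natAbs) hi) (le_sup (f := fun i => (k i).natAbs) hi))
  simp only [supBracket, Pi.add_apply]
  omega

lemma supBracket_le_add_sub (n m : ℤ³) : supBracket n ≤ supBracket m + supBracket (n - m) := by
  simpa using supBracket_add_le m (n - m)

lemma card_filter_supBracket_eq_le (F : Finset ℤ³) (j : ℕ) :
    #{m ∈ F | supBracket m = j} ≤ 24 * j ^ 2 := by
  obtain _ | r := j
  · simp [(supBracket_pos _).ne']
  -- `{supBracket = r + 1} = [-r, r]³ \ [-(r-1), r-1]³` has `(2r+1)³ - (2r-1)³ = 24r² + 2` points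
  let box : ℤ → Finset ℤ³ := fun c => Icc (fun _ => -c) (fun _ => c)
  have hcard : ∀ c, #(box c) = (c + 1 + c).toNat ^ 3 := fun c => by
    simp [box, Pi.card_Icc, Int.card_Icc]
  have hsub : {m ∈ F | supBracket m = r + 1} ⊆ box r \ box (r - 1) := by
    intro m hm
    obtain ⟨-, hm⟩ := mem_filter.1 hm
    have hsup : univ.sup (fun i => (m i).natAbs) = r := by simp only [supBracket] at hm; omega
    obtain ⟨i, -, hi⟩ := exists_mem_eq_sup univ univ_nonempty (fun i => (m i).natAbs)
    have hk : ∀ k, (m k).natAbs ≤ r := fun k =>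
      hsup ▸ le_sup (f := fun i => (m i).natAbs) (mem_univ k)
    simp only [box, mem_sdiff, mem_Icc, Pi.le_def, not_and_or, not_forall]
    refine ⟨⟨fun k => ?_, fun k => ?_⟩, ?_⟩
    · have := hk k; omega
    · have := hk k; omega
    · by_cases h : 0 ≤ m i
      · exact .inr ⟨i, by omega⟩
      · exact .inl ⟨i, by omega⟩
  calc #{m ∈ F | supBracket m = r + 1} ≤ #(box r \ box (r - 1)) := card_le_card hsub
    _ = #(box r) - #(box (r - 1)) :=
        card_sdiff_of_subset (Icc_subset_Icc (fun _ => by simp) (fun _ => by simp))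
    _ ≤ 24 * (r + 1) ^ 2 := by
      rw [hcard, hcard]
      obtain _ | k := r
      · simp
      · have h1 : ((↑(k + 1) : ℤ) + 1 + ↑(k + 1)).toNat = 2 * k + 3 := by omega
        have h2 : ((↑(k + 1) : ℤ) - 1 + 1 + (↑(k + 1) - 1)).toNat = 2 * k + 1 := by omega
        rw [h1, h2, Nat.sub_le_iff_le_add]
        nlinarith

lemma sum_comp_supBracket_le (F : Finset ℤ³) (g : ℕ → ℝ) (hg : ∀ j, 0 ≤ g j) :
    ∑ m ∈ F, g (supBracket m) ≤ ∑ j ∈ F.image supBracket, 24 * (j : ℝ) ^ 2 * g j := by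
  rw [sum_comp]
  gcongr with j
  rw [nsmul_eq_mul]
  gcongr
  · exact hg j
  · exact_mod_cast card_filter_supBracket_eq_le F j

lemma sum_Icc_rpow_le {e : ℝ} (he : -1 < e) (he' : e ≤ 0) (N : ℕ) :
    ∑ j ∈ Icc 1 N, (j : ℝ) ^ e ≤ N ^ (e + 1) / (e + 1) := by
  have he1 : 0 < e + 1 := by linarith
  obtain _ | N := N
  · simp [Real.zero_rpow he1.ne']
  have hanti : AntitoneOn (fun x : ℝ => x ^ e) (Set.Icc 1 (1 + N)) :=
    fun x hx y _ hxy => Real.rpow_le_rpow_of_nonpos (by linarith [hx.1]) hxy he'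
  have hint := hanti.sum_le_integral
  rw [integral_rpow (.inl he), Real.one_rpow] at hint
  rw [← Ico_add_one_right_eq_Icc, sum_Ico_eq_sum_range, Nat.add_sub_cancel, sum_range_succ']
  push_cast at hint ⊢
  simp only [Real.one_rpow]
  calc _ ≤ ((1 + N) ^ (e + 1) - 1) / (e + 1) + 1 := by gcongr
    _ ≤ _ := by
      rw [div_add_one he1.ne', add_comm (N : ℝ)]
      gcongr
      linarith

lemma sum_supBracket_rpow_le_of_le {q : ℝ} (hq : 2 ≤ q) (hq' : q < 3) {R : ℕ} {F : Finset ℤ³}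
    (hF : ∀ m ∈ F, supBracket m ≤ R) :
    ∑ m ∈ F, (supBracket m : ℝ) ^ (-q) ≤ 24 / (3 - q) * R ^ (3 - q) := by
  have himage : F.image supBracket ⊆ Icc 1 R := fun j hj => by
    obtain ⟨m, hm, rfl⟩ := mem_image.1 hj
    exact mem_Icc.2 ⟨supBracket_pos m, hF m hm⟩
  calc ∑ m ∈ F, (supBracket m : ℝ) ^ (-q)
      ≤ ∑ j ∈ Icc 1 R, 24 * (j : ℝ) ^ 2 * (j : ℝ) ^ (-q) :=
        (sum_comp_supBracket_le F (fun j => (j : ℝ) ^ (-q)) fun j => by positivity).trans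
          (sum_le_sum_of_subset_of_nonneg himage fun j _ _ => by positivity)
    _ = 24 * ∑ j ∈ Icc 1 R, (j : ℝ) ^ (2 - q) := by
        rw [mul_sum]
        refine sum_congr rfl fun j hj => ?_
        have hj : (0 : ℝ) < j := by exact_mod_cast (mem_Icc.1 hj).1
        rw [mul_assoc, ← Real.rpow_natCast, ← Real.rpow_add hj]
        norm_num [sub_eq_add_neg]
    _ ≤ 24 * (R ^ (2 - q + 1) / (2 - q + 1)) := by
        gcongr
        exact sum_Icc_rpow_le (by linarith) (by linarith) R
    _ = 24 / (3 - q) * R ^ (3 - q) := by ring_nf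

lemma sum_supBracket_rpow_le_of_lt {t : ℝ} (ht : 4 ≤ t) {R : ℕ} (hR : R ≠ 0) {F : Finset ℤ³}
    (hF : ∀ m ∈ F, R < supBracket m) :
    ∑ m ∈ F, (supBracket m : ℝ) ^ (-t) ≤ 24 * R ^ (3 - t) := by
  set N := max R ((F.image supBracket).sup id)
  have himage : F.image supBracket ⊆ Ioc R N := fun j hj => by
    obtain ⟨m, hm, rfl⟩ := mem_image.1 hj
    exact mem_Ioc.2 ⟨hF m hm, (le_sup (f := id) hj).trans (le_max_right _ _)⟩
  have hR0 : (0 : ℝ) < R := by positivity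
  calc ∑ m ∈ F, (supBracket m : ℝ) ^ (-t)
      ≤ ∑ j ∈ Ioc R N, 24 * (j : ℝ) ^ 2 * (j : ℝ) ^ (-t) :=
        (sum_comp_supBracket_le F (fun j => (j : ℝ) ^ (-t)) fun j => by positivity).trans
          (sum_le_sum_of_subset_of_nonneg himage fun j _ _ => by positivity)
    _ ≤ ∑ j ∈ Ioc R N, 24 * (R : ℝ) ^ (4 - t) * ((j : ℝ) ^ 2)⁻¹ := by
        refine sum_le_sum fun j hj => ?_
        have hRj : (R : ℝ) ≤ j := by exact_mod_cast (mem_Ioc.1 hj).1.le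
        have hj : (0 : ℝ) < j := hR0.trans_le hRj
        have : (j : ℝ) ^ 2 * (j : ℝ) ^ (-t) = (j : ℝ) ^ (4 - t) * ((j : ℝ) ^ 2)⁻¹ := by
          rw [← Real.rpow_natCast, ← Real.rpow_neg hj.le, ← Real.rpow_add hj, ← Real.rpow_add hj]
          congr 1
          ring
        rw [mul_assoc, this, ← mul_assoc]
        have := Real.rpow_le_rpow_of_nonpos hR0 hRj (by linarith : 4 - t ≤ 0)
        gcongr
    _ = 24 * (R : ℝ) ^ (4 - t) * ∑ j ∈ Ioc R N, ((j : ℝ) ^ 2)⁻¹ := by rw [mul_sum]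
    _ ≤ 24 * (R : ℝ) ^ (4 - t) * (R : ℝ)⁻¹ := by
        gcongr
        exact (sum_Ioc_inv_sq_le_sub hR (le_max_left _ _)).trans (sub_le_self _ (by positivity))
    _ = 24 * R ^ (3 - t) := by
        rw [mul_assoc, ← Real.rpow_neg_one, ← Real.rpow_add hR0]
        ring_nf

lemma sum_supBracket_conv_near_le {q : ℝ} (hq : 2 ≤ q) (hq' : q < 3) (n : ℤ³) {G : Finset ℤ³}
    (hG : ∀ m ∈ G, supBracket m ≤ supBracket (n - m) ∧ supBracket m ≤ supBracket n) :
    ∑ m ∈ G, (supBracket m : ℝ) ^ (-q) * (supBracket (n - m) : ℝ) ^ (-q)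
      ≤ 24 * 2 ^ q / (3 - q) * (supBracket n : ℝ) ^ (3 - 2 * q) := by
  have hR : (0 : ℝ) < supBracket n := by exact_mod_cast supBracket_pos n
  calc _ ≤ ∑ m ∈ G, (supBracket m : ℝ) ^ (-q) * (2 ^ q * (supBracket n : ℝ) ^ (-q)) := by
        refine sum_le_sum fun m hm => ?_
        have hhalf : (supBracket n : ℝ) ≤ 2 * supBracket (n - m) := by
          have := supBracket_le_add_sub n m
          have := (hG m hm).1
          exact_mod_cast (by omega : supBracket n ≤ 2 * supBracket (n - m))
        have := Real.rpow_neg_le_mul_rpow_neg hR two_pos (by linarith) hhalf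
        gcongr
    _ = 2 ^ q * (supBracket n : ℝ) ^ (-q) * ∑ m ∈ G, (supBracket m : ℝ) ^ (-q) := by
        rw [mul_sum]
        exact sum_congr rfl fun m _ => mul_comm _ _
    _ ≤ 2 ^ q * (supBracket n : ℝ) ^ (-q) * (24 / (3 - q) * (supBracket n : ℝ) ^ (3 - q)) := by
        gcongr
        exact sum_supBracket_rpow_le_of_le hq hq' fun m hm => (hG m hm).2
    _ = 24 * 2 ^ q / (3 - q) * (supBracket n : ℝ) ^ (3 - 2 * q) := by
        rw [show 3 - 2 * q = -q + (3 - q) by ring, Real.rpow_add hR]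
        ring

lemma sum_supBracket_conv_far_le {q : ℝ} (hq : 2 ≤ q) (n : ℤ³) {G : Finset ℤ³}
    (hG : ∀ m ∈ G, supBracket m ≤ supBracket (n - m) ∧ supBracket n < supBracket m) :
    ∑ m ∈ G, (supBracket m : ℝ) ^ (-q) * (supBracket (n - m) : ℝ) ^ (-q)
      ≤ 24 * (supBracket n : ℝ) ^ (3 - 2 * q) := by
  calc _ ≤ ∑ m ∈ G, (supBracket m : ℝ) ^ (-(2 * q)) := by
        refine sum_le_sum fun m hm => ?_
        have hm0 : (0 : ℝ) < supBracket m := by exact_mod_cast supBracket_pos m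
        have hle : (supBracket m : ℝ) ≤ supBracket (n - m) := by exact_mod_cast (hG m hm).1
        have := Real.rpow_le_rpow_of_nonpos hm0 hle (by linarith : -q ≤ 0)
        calc _ ≤ (supBracket m : ℝ) ^ (-q) * (supBracket m : ℝ) ^ (-q) := by gcongr
          _ = _ := by rw [← Real.rpow_add hm0]; ring_nf
    _ ≤ 24 * (supBracket n : ℝ) ^ (3 - 2 * q) :=
        sum_supBracket_rpow_le_of_lt (by linarith) (supBracket_pos n).ne' fun m hm => (hG m hm).2

lemma sum_supBracket_conv_le_of_le {q : ℝ} (hq : 2 ≤ q) (hq' : q < 3) (n : ℤ³) {G : Finset ℤ³}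
    (hG : ∀ m ∈ G, supBracket m ≤ supBracket (n - m)) :
    ∑ m ∈ G, (supBracket m : ℝ) ^ (-q) * (supBracket (n - m) : ℝ) ^ (-q)
      ≤ 24 * (2 ^ q / (3 - q) + 1) * (supBracket n : ℝ) ^ (3 - 2 * q) := by
  rw [← sum_filter_add_sum_filter_not G (fun m => supBracket m ≤ supBracket n)]
  calc _ ≤ 24 * 2 ^ q / (3 - q) * (supBracket n : ℝ) ^ (3 - 2 * q)
        + 24 * (supBracket n : ℝ) ^ (3 - 2 * q) := by
        refine add_le_add (sum_supBracket_conv_near_le hq hq' n fun m hm => ?_)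
          (sum_supBracket_conv_far_le hq n fun m hm => ?_) <;>
        obtain ⟨hmG, hmn⟩ := mem_filter.1 hm
        · exact ⟨hG m hmG, hmn⟩
        · exact ⟨hG m hmG, not_le.1 hmn⟩
    _ = _ := by ring

lemma sum_supBracket_conv_le {q : ℝ} (hq : 2 ≤ q) (hq' : q < 3) (n : ℤ³) (F : Finset ℤ³) :
    ∑ m ∈ F, (supBracket m : ℝ) ^ (-q) * (supBracket (n - m) : ℝ) ^ (-q)
      ≤ 48 * (2 ^ q / (3 - q) + 1) * (supBracket n : ℝ) ^ (3 - 2 * q) := by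
  rw [← sum_filter_add_sum_filter_not F (fun m => supBracket m ≤ supBracket (n - m))]
  have hreflect : ∑ m ∈ F with ¬supBracket m ≤ supBracket (n - m),
      (supBracket m : ℝ) ^ (-q) * (supBracket (n - m) : ℝ) ^ (-q)
        = ∑ k ∈ (F.filter fun m => ¬supBracket m ≤ supBracket (n - m)).image (n - ·),
            (supBracket k : ℝ) ^ (-q) * (supBracket (n - k) : ℝ) ^ (-q) := by
    rw [sum_image fun _ _ _ _ h => sub_right_injective h]
    exact sum_congr rfl fun m _ => by rw [sub_sub_cancel, mul_comm]
  rw [hreflect]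
  calc _ ≤ 24 * (2 ^ q / (3 - q) + 1) * (supBracket n : ℝ) ^ (3 - 2 * q)
        + 24 * (2 ^ q / (3 - q) + 1) * (supBracket n : ℝ) ^ (3 - 2 * q) := by
        refine add_le_add (sum_supBracket_conv_le_of_le hq hq' n fun m hm => (mem_filter.1 hm).2)
          (sum_supBracket_conv_le_of_le hq hq' n fun k hk => ?_)
        obtain ⟨m, hm, rfl⟩ := mem_image.1 hk
        rw [sub_sub_cancel]
        exact (not_le.1 (mem_filter.1 hm).2).le
    _ = _ := by ring

def sobolevWeight (m : ℤ³) : ℝ := 1 + ∑ i, (m i : ℝ) ^ 2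

lemma sobolevWeight_pos (m : ℤ³) : 0 < sobolevWeight m := by
  unfold sobolevWeight; positivity

lemma sq_natAbs_le_sobolevWeight_sub_one (m : ℤ³) (i : Fin 3) :
    ((m i).natAbs : ℝ) ^ 2 ≤ sobolevWeight m - 1 := by
  rw [sobolevWeight, add_sub_cancel_left, Nat.cast_natAbs, Int.cast_abs, sq_abs]
  exact single_le_sum (f := fun i => (m i : ℝ) ^ 2) (fun _ _ => sq_nonneg _) (mem_univ i)

lemma sq_supBracket_le_two_mul_sobolevWeight (m : ℤ³) :
    (supBracket m : ℝ) ^ 2 ≤ 2 * sobolevWeight m := by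
  obtain ⟨i, -, hi⟩ := exists_mem_eq_sup univ univ_nonempty (fun i => (m i).natAbs)
  have := sq_natAbs_le_sobolevWeight_sub_one m i
  rw [supBracket, hi]
  push_cast
  nlinarith [sq_nonneg (((m i).natAbs : ℝ) - 1)]

lemma sobolevWeight_le_three_mul_sq_supBracket (m : ℤ³) :
    sobolevWeight m ≤ 3 * (supBracket m : ℝ) ^ 2 := by
  rw [sobolevWeight, supBracket]
  set r := univ.sup fun i => (m i).natAbs
  have hi : ∀ i, (m i : ℝ) ^ 2 ≤ (r : ℝ) ^ 2 := fun i => by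
    have : (m i).natAbs ≤ r := le_sup (f := fun i => (m i).natAbs) (mem_univ i)
    rw [← sq_abs, ← Int.cast_abs, ← Nat.cast_natAbs]
    gcongr
  have := sum_le_sum fun i (_ : i ∈ univ) => hi i
  simp only [sum_const, card_univ, Fintype.card_fin, nsmul_eq_mul, Nat.cast_ofNat] at this
  push_cast
  nlinarith [(Nat.cast_nonneg r : (0 : ℝ) ≤ r)]

lemma exists_sum_sobolevWeight_conv_le {p : ℝ} (hp : 1 ≤ p) (hp' : p < 3 / 2) :
    ∃ K : ℝ, 0 < K ∧ ∀ (n : ℤ³) (F : Finset ℤ³),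
      ∑ m ∈ F, sobolevWeight m ^ (-p) * sobolevWeight (n - m) ^ (-p)
        ≤ K * sobolevWeight n ^ (-(2 * p - 3 / 2)) := by
  set C := 48 * (2 ^ (2 * p) / (3 - 2 * p) + 1)
  have hC : 0 < C := by
    have : 0 < 3 - 2 * p := by linarith
    positivity
  refine ⟨4 ^ p * C * 3 ^ (2 * p - 3 / 2), by positivity, fun n F => ?_⟩
  have hpos : ∀ m : ℤ³, (0 : ℝ) < supBracket m := fun m => by exact_mod_cast supBracket_pos m
  have hsq : ∀ (m : ℤ³) (e : ℝ), ((supBracket m : ℝ) ^ 2) ^ e = (supBracket m : ℝ) ^ (2 * e) :=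
    fun m e => by rw [← Real.rpow_natCast, ← Real.rpow_mul (hpos m).le]; norm_num
  have hweight : ∀ m, sobolevWeight m ^ (-p) ≤ 2 ^ p * (supBracket m : ℝ) ^ (-(2 * p)) :=
    fun m => by
      rw [neg_mul_eq_mul_neg, ← hsq]
      exact Real.rpow_neg_le_mul_rpow_neg (pow_pos (hpos m) 2) two_pos (by linarith)
        (sq_supBracket_le_two_mul_sobolevWeight m)
  have hcenter : (supBracket n : ℝ) ^ (3 - 2 * (2 * p))
      ≤ 3 ^ (2 * p - 3 / 2) * sobolevWeight n ^ (-(2 * p - 3 / 2)) := by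
    rw [show 3 - 2 * (2 * p) = 2 * (-(2 * p - 3 / 2)) by ring, ← hsq]
    exact Real.rpow_neg_le_mul_rpow_neg (sobolevWeight_pos n) three_pos (by linarith)
      (sobolevWeight_le_three_mul_sq_supBracket n)
  calc ∑ m ∈ F, sobolevWeight m ^ (-p) * sobolevWeight (n - m) ^ (-p)
      ≤ ∑ m ∈ F, (2 ^ p * (supBracket m : ℝ) ^ (-(2 * p))) *
          (2 ^ p * (supBracket (n - m) : ℝ) ^ (-(2 * p))) :=
        sum_le_sum fun m _ => mul_le_mul (hweight m) (hweight (n - m))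
          (Real.rpow_nonneg (sobolevWeight_pos _).le _) (by positivity)
    _ = 4 ^ p * ∑ m ∈ F,
          (supBracket m : ℝ) ^ (-(2 * p)) * (supBracket (n - m) : ℝ) ^ (-(2 * p)) := by
        rw [mul_sum, show (4 : ℝ) = 2 * 2 by norm_num, Real.mul_rpow zero_le_two zero_le_two]
        exact sum_congr rfl fun m _ => by ring
    _ ≤ 4 ^ p * (C * (supBracket n : ℝ) ^ (3 - 2 * (2 * p))) := by
        gcongr
        exact sum_supBracket_conv_le (by linarith) (by linarith) n F
    _ ≤ 4 ^ p * (C * (3 ^ (2 * p - 3 / 2) * sobolevWeight n ^ (-(2 * p - 3 / 2)))) := by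
        gcongr
    _ = _ := by ring

lemma exists_tsum_sobolevWeight_conv_le {p : ℝ} (hp : 1 ≤ p) (hp' : p < 3 / 2) :
    ∃ K : ℝ, 0 < K ∧ ∀ n : ℤ³,
      ∑' m, ENNReal.ofReal (sobolevWeight m) ^ (-p) * ENNReal.ofReal (sobolevWeight (n - m)) ^ (-p)
        ≤ ENNReal.ofReal K * ENNReal.ofReal (sobolevWeight n) ^ (-(2 * p - 3 / 2)) := by
  obtain ⟨K, hK, hsum⟩ := exists_sum_sobolevWeight_conv_le hp hp'
  refine ⟨K, hK, fun n => ?_⟩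
  have hofReal : ∀ m (e : ℝ),
      ENNReal.ofReal (sobolevWeight m) ^ e = ENNReal.ofReal (sobolevWeight m ^ e) :=
    fun m e => ENNReal.ofReal_rpow_of_pos (sobolevWeight_pos m)
  have hnonneg : ∀ m (e : ℝ), 0 ≤ sobolevWeight m ^ e :=
    fun m e => Real.rpow_nonneg (sobolevWeight_pos m).le e
  simp only [hofReal, ← ENNReal.ofReal_mul (hnonneg _ _), ← ENNReal.ofReal_mul hK.le]
  refine ENNReal.summable.tsum_le_of_sum_le fun F => ?_
  rw [← ENNReal.ofReal_sum_of_nonneg fun m _ => mul_nonneg (hnonneg _ _) (hnonneg _ _)]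
  exact ENNReal.ofReal_le_ofReal (hsum n F)

section

variable {E : Type*} [NormedAddCommGroup E]

noncomputable def sobolevSq (s : ℝ) (a : ℤ³ → E) : ℝ≥0∞ :=
  ∑' n, ENNReal.ofReal (sobolevWeight n) ^ s * ‖a n‖ₑ ^ 2

lemma Ns_eq_sobolevSq_rpow (s : ℝ) (a : ℤ³ → E) : Ns s a = sobolevSq s a ^ (1 / 2 : ℝ) := by
  refine congrArg (· ^ (1 / 2 : ℝ)) (tsum_congr fun n => ?_)
  rw [← sobolevWeight, ENNReal.ofReal_mul (Real.rpow_nonneg (sobolevWeight_pos n).le s),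
    ← ENNReal.ofReal_rpow_of_pos (sobolevWeight_pos n), ENNReal.ofReal_pow (norm_nonneg _),
    ofReal_norm]

lemma sobolevSq_le_rpow_mul_rpow {s s₀ s₁ θ₀ θ₁ : ℝ} (hθ₀ : 0 ≤ θ₀) (hθ₁ : 0 ≤ θ₁)
    (hθ : θ₀ + θ₁ = 1) (hs : s = θ₀ * s₀ + θ₁ * s₁) (a : ℤ³ → E) :
    sobolevSq s a ≤ sobolevSq s₀ a ^ θ₀ * sobolevSq s₁ a ^ θ₁ := by
  refine le_of_eq_of_le (tsum_congr fun n => ?_) (ENNReal.tsum_rpow_mul_rpow_le hθ₀ hθ₁ hθ _ _)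
  have hw₀ : ENNReal.ofReal (sobolevWeight n) ≠ 0 := by simp [sobolevWeight_pos n]
  rw [ENNReal.mul_rpow_of_nonneg _ _ hθ₀, ENNReal.mul_rpow_of_nonneg _ _ hθ₁,
    ← ENNReal.rpow_mul, ← ENNReal.rpow_mul, mul_mul_mul_comm,
    ← ENNReal.rpow_add _ _ hw₀ ENNReal.ofReal_ne_top, ← ENNReal.rpow_add_of_nonneg _ _ hθ₀ hθ₁,
    hθ, ENNReal.rpow_one, hs, mul_comm s₀, mul_comm s₁]

end

lemma enorm_conv_sq_le (v : ℤ³ → ℝ≥0∞) (hv₀ : ∀ m, v m ≠ 0) (hv : ∀ m, v m ≠ ⊤)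
    (a b : ℤ³ → ℂ) (n : ℤ³) :
    ‖conv a b n‖ₑ ^ 2 ≤ (∑' m, (v m)⁻¹ * (v (n - m))⁻¹) *
      ∑' m, (v m * ‖a m‖ₑ ^ 2) * (v (n - m) * ‖b (n - m)‖ₑ ^ 2) := by
  have hconv : ‖conv a b n‖ₑ ≤ ∑' m, ‖a m‖ₑ * ‖b (n - m)‖ₑ := by
    simpa only [conv, enorm_mul] using enorm_tsum_le_tsum_enorm (f := fun m => a m * b (n - m))
  have hinv : ∀ m, (v m * v (n - m))⁻¹ = (v m)⁻¹ * (v (n - m))⁻¹ := fun m =>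
    ENNReal.mul_inv (.inl (hv₀ m)) (.inl (hv m))
  have hsq : ∀ m, v m * v (n - m) * (‖a m‖ₑ * ‖b (n - m)‖ₑ) ^ 2
      = (v m * ‖a m‖ₑ ^ 2) * (v (n - m) * ‖b (n - m)‖ₑ ^ 2) := fun m => by ring
  calc ‖conv a b n‖ₑ ^ 2 ≤ (∑' m, ‖a m‖ₑ * ‖b (n - m)‖ₑ) ^ 2 := pow_le_pow_left' hconv 2
    _ ≤ _ := by
      simpa only [hinv, hsq] using ENNReal.tsum_sq_le_tsum_inv_mul_tsum
        (fun m => v m * v (n - m)) (fun m => ‖a m‖ₑ * ‖b (n - m)‖ₑ)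
        (fun m => mul_ne_zero (hv₀ m) (hv₀ _)) (fun m => ENNReal.mul_ne_top (hv m) (hv _))

lemma exists_sobolevSq_conv_le {p : ℝ} (hp : 1 ≤ p) (hp' : p < 3 / 2) :
    ∃ K : ℝ, 0 < K ∧ ∀ a b : ℤ³ → ℂ,
      sobolevSq (2 * p - 3 / 2) (conv a b)
        ≤ ENNReal.ofReal K * (sobolevSq p a * sobolevSq p b) := by
  obtain ⟨K, hK, hkernel⟩ := exists_tsum_sobolevWeight_conv_le hp hp'
  refine ⟨K, hK, fun a b => ?_⟩
  set w : ℤ³ → ℝ≥0∞ := fun m => ENNReal.ofReal (sobolevWeight m)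
  have hw₀ : ∀ m, w m ≠ 0 := fun m => by simp [w, sobolevWeight_pos m]
  have hw : ∀ m, w m ≠ ⊤ := fun m => ENNReal.ofReal_ne_top
  have hpoint : ∀ n, w n ^ (2 * p - 3 / 2) * ‖conv a b n‖ₑ ^ 2
      ≤ ENNReal.ofReal K * ∑' m, (w m ^ p * ‖a m‖ₑ ^ 2) * (w (n - m) ^ p * ‖b (n - m)‖ₑ ^ 2) := by
    intro n
    set S := ∑' m, (w m ^ p * ‖a m‖ₑ ^ 2) * (w (n - m) ^ p * ‖b (n - m)‖ₑ ^ 2)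
    have hcancel : w n ^ (2 * p - 3 / 2) * w n ^ (-(2 * p - 3 / 2)) = 1 := by
      rw [← ENNReal.rpow_add _ _ (hw₀ n) (hw n), add_neg_cancel, ENNReal.rpow_zero]
    calc w n ^ (2 * p - 3 / 2) * ‖conv a b n‖ₑ ^ 2
        ≤ w n ^ (2 * p - 3 / 2) * ((∑' m, w m ^ (-p) * w (n - m) ^ (-p)) * S) := by
          simp only [ENNReal.rpow_neg]
          gcongr
          exact enorm_conv_sq_le (w · ^ p)
            (fun m => (ENNReal.rpow_pos (pos_iff_ne_zero.2 (hw₀ m)) (hw m)).ne')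
            (fun m => ENNReal.rpow_ne_top_of_nonneg (by linarith) (hw m)) a b n
      _ ≤ w n ^ (2 * p - 3 / 2) * (ENNReal.ofReal K * w n ^ (-(2 * p - 3 / 2)) * S) := by
          gcongr
          exact hkernel n
      _ = ENNReal.ofReal K * S := by
          rw [mul_comm (ENNReal.ofReal K), mul_assoc, ← mul_assoc, hcancel, one_mul]
  calc sobolevSq (2 * p - 3 / 2) (conv a b)
      ≤ ∑' n, ENNReal.ofReal K *
          ∑' m, (w m ^ p * ‖a m‖ₑ ^ 2) * (w (n - m) ^ p * ‖b (n - m)‖ₑ ^ 2) :=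
        ENNReal.tsum_le_tsum hpoint
    _ = ENNReal.ofReal K * (sobolevSq p a * sobolevSq p b) := by
        rw [ENNReal.tsum_mul_left]
        exact congrArg _ (ENNReal.tsum_tsum_mul_sub (fun m => w m ^ p * ‖a m‖ₑ ^ 2)
          (fun m => w m ^ p * ‖b m‖ₑ ^ 2))

/-- Product-and-interpolation chain:
`N_{1/2+α}(a*b) ≤ C N_{1/2+α}(a)^{(1+α)/2} N_{3/2+α}(a)^{(1-α)/2}
  N_{1/2+α}(b)^{(1+α)/2} N_{3/2+α}(b)^{(1-α)/2}`. -/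
theorem Ns_product_interpolation (α : ℝ) (hα0 : 0 ≤ α) (hα1 : α < 1) :
    ∃ C : ℝ, 0 < C ∧ ∀ a b : (Fin 3 → ℤ) → ℂ,
      Ns (1 / 2 + α) a < ⊤ → Ns (3 / 2 + α) a < ⊤ →
      Ns (1 / 2 + α) b < ⊤ → Ns (3 / 2 + α) b < ⊤ →
      Ns (1 / 2 + α) (conv a b) ≤ ENNReal.ofReal C *
        Ns (1 / 2 + α) a ^ ((1 + α) / 2) * Ns (3 / 2 + α) a ^ ((1 - α) / 2) *
        Ns (1 / 2 + α) b ^ ((1 + α) / 2) * Ns (3 / 2 + α) b ^ ((1 - α) / 2) := by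
  obtain ⟨K, hK, hprod⟩ := exists_sobolevSq_conv_le (p := 1 + α / 2) (by linarith) (by linarith)
  rw [show 2 * (1 + α / 2) - 3 / 2 = 1 / 2 + α by ring] at hprod
  have hinterp : ∀ c : ℤ³ → ℂ, sobolevSq (1 + α / 2) c
      ≤ sobolevSq (1 / 2 + α) c ^ ((1 + α) / 2) * sobolevSq (3 / 2 + α) c ^ ((1 - α) / 2) :=
    sobolevSq_le_rpow_mul_rpow (by linarith) (by linarith) (by ring) (by ring)
  have hsqrt : ∀ (x : ℝ≥0∞) (θ : ℝ), (x ^ θ) ^ (1 / 2 : ℝ) = (x ^ (1 / 2 : ℝ)) ^ θ :=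
    fun x θ => by rw [← ENNReal.rpow_mul, ← ENNReal.rpow_mul, mul_comm]
  refine ⟨√K, Real.sqrt_pos.2 hK, fun a b _ _ _ _ => ?_⟩
  simp only [Ns_eq_sobolevSq_rpow]
  calc sobolevSq (1 / 2 + α) (conv a b) ^ (1 / 2 : ℝ)
      ≤ (ENNReal.ofReal K *
          ((sobolevSq (1 / 2 + α) a ^ ((1 + α) / 2) * sobolevSq (3 / 2 + α) a ^ ((1 - α) / 2)) *
            (sobolevSq (1 / 2 + α) b ^ ((1 + α) / 2) * sobolevSq (3 / 2 + α) b ^ ((1 - α) / 2))))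
          ^ (1 / 2 : ℝ) := by
        gcongr
        exact (hprod a b).trans (by gcongr <;> exact hinterp _)
    _ = _ := by
        simp only [ENNReal.mul_rpow_of_nonneg _ _ (by norm_num : (0 : ℝ) ≤ 1 / 2), hsqrt,
          ENNReal.ofReal_rpow_of_nonneg hK.le (by norm_num : (0 : ℝ) ≤ 1 / 2), ← Real.sqrt_eq_rpow]
        ring
end

section
/- For every $\delta \in (0,1)$ there exists a constant $C = C(\delta) > 0$ such that for all $a, b : \mathbb{Z}^3 \to \mathbb{C}$ with $N_{3/2+\delta}(a) < \infty$ and $N_{3/2+\delta}(b) < \infty$, one has $N_{1/2+\delta}(a*b)^2 \le C \big( N_{1/2+\delta}(a)^2 \, N_{3/2+\delta}(b)^2 + N_{3/2+\delta}(a)^2 \, N_{1/2+\delta}(b)^2 \big)$. -/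
/-! Write `⟨n⟩ = (1 + |n|²)^{1/2}`, so that `bracketSq n = ⟨n⟩²`.
Since `⟨m + k⟩^s ≤ 2^s (⟨m⟩^s + ⟨k⟩^s)` for `s ≥ 0`, the weighted convolution
`⟨n⟩^s |a * b|(n)` is dominated by `(⟨·⟩^s |a|) * |b| + |a| * (⟨·⟩^s |b|)`.
Young's inequality `‖F * H‖_{ℓ²} ≤ ‖F‖_{ℓ²} ‖H‖_{ℓ¹}` bounds each term by an `N_s` norm
times an `ℓ¹` norm, and Cauchy–Schwarz gives `‖a‖_{ℓ¹}² ≤ (∑ ⟨n⟩^{-2t}) N_t(a)²`, where the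
sum is finite for `t > 3/2` because it is dominated by a product of three one-dimensional
sums. -/

open scoped ENNReal NNReal BigOperators

namespace ENNReal

variable {ι : Type*}

theorem inner_le_weight_mul_Lp_tsum {p : ℝ} (hp : 1 ≤ p) (w f : ι → ℝ≥0∞) :
    ∑' i, w i * f i ≤ (∑' i, w i) ^ (1 - p⁻¹) * (∑' i, w i * f i ^ p) ^ p⁻¹ := by
  have hp₀ : 0 ≤ p⁻¹ := by positivity
  have hp₁ : 0 ≤ 1 - p⁻¹ := sub_nonneg.2 (inv_le_one_of_one_le₀ hp)
  rw [ENNReal.tsum_eq_iSup_sum (f := fun i => w i * f i)]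
  refine iSup_le fun s => (inner_le_weight_mul_Lp_of_nonneg s hp w f).trans ?_
  gcongr <;> exact ENNReal.sum_le_tsum s

theorem sq_tsum_mul_le (w f : ι → ℝ≥0∞) :
    (∑' i, w i * f i) ^ 2 ≤ (∑' i, w i) * ∑' i, w i * f i ^ 2 := by
  have h := inner_le_weight_mul_Lp_tsum one_le_two w f
  simp only [rpow_two] at h
  calc (∑' i, w i * f i) ^ 2
      ≤ ((∑' i, w i) ^ (1 - 2⁻¹ : ℝ) * (∑' i, w i * f i ^ 2) ^ (2⁻¹ : ℝ)) ^ 2 := by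
        gcongr
    _ = _ := by
        rw [mul_pow, ← rpow_natCast, ← rpow_natCast, ← rpow_mul, ← rpow_mul]
        norm_num

theorem tsum_fin_pi_prod {α : Type*} : ∀ {d : ℕ} (f : Fin d → α → ℝ≥0∞),
    ∑' n : Fin d → α, ∏ i, f i (n i) = ∏ i, ∑' k, f i k
  | 0, f => by simp
  | d + 1, f => by
    rw [← (Fin.consEquiv fun _ => α).tsum_eq, Fin.prod_univ_succ, ← tsum_fin_pi_prod,
      ← ENNReal.tsum_mul_right, ENNReal.tsum_prod']
    simp [Fin.prod_univ_succ, Fin.consEquiv, ENNReal.tsum_mul_left]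

theorem add_sq_le (x y : ℝ≥0∞) : (x + y) ^ 2 ≤ 2 * (x ^ 2 + y ^ 2) := by
  have h := rpow_add_le_mul_rpow_add_rpow x y one_le_two
  norm_num [rpow_two] at h
  exact h

end ENNReal

section Convolution

variable {G : Type*} [AddCommGroup G]

/-- Working in `ℝ≥0∞` removes all summability side conditions. -/
noncomputable def econv (F H : G → ℝ≥0∞) (n : G) : ℝ≥0∞ :=
  ∑' m, F m * H (n - m)

theorem econv_comm (F H : G → ℝ≥0∞) : econv F H = econv H F := by
  funext n
  rw [econv, ← (Equiv.subLeft n).tsum_eq]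
  simp [econv, mul_comm]

theorem tsum_sq_econv_le (F H : G → ℝ≥0∞) :
    ∑' n, econv F H n ^ 2 ≤ (∑' m, F m ^ 2) * (∑' m, H m) ^ 2 := by
  have shift : ∀ m, ∑' n, H (n - m) = ∑' n, H n := fun m => (Equiv.subRight m).tsum_eq H
  have pointwise : ∀ n, econv F H n ^ 2 ≤ (∑' m, H m) * ∑' m, H (n - m) * F m ^ 2 := by
    intro n
    have hsum : ∑' m, H (n - m) = ∑' m, H m := (Equiv.subLeft n).tsum_eq H
    calc econv F H n ^ 2 = (∑' m, H (n - m) * F m) ^ 2 := by simp only [econv, mul_comm]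
      _ ≤ (∑' m, H (n - m)) * ∑' m, H (n - m) * F m ^ 2 := ENNReal.sq_tsum_mul_le _ F
      _ = _ := by rw [hsum]
  calc ∑' n, econv F H n ^ 2 ≤ ∑' n, (∑' m, H m) * ∑' m, H (n - m) * F m ^ 2 :=
        ENNReal.tsum_le_tsum pointwise
    _ = (∑' m, H m) * ∑' m, F m ^ 2 * ∑' n, H (n - m) := by
        rw [ENNReal.tsum_mul_left, ENNReal.tsum_comm]
        simp_rw [← ENNReal.tsum_mul_left, mul_comm]
    _ = _ := by simp_rw [shift, ENNReal.tsum_mul_right]; ring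

theorem mul_econv_le {u : G → ℝ≥0∞} {c : ℝ≥0∞} (hu : ∀ m k, u (m + k) ≤ c * (u m + u k))
    (F H : G → ℝ≥0∞) (n : G) :
    u n * econv F H n ≤ c * (econv (u * F) H n + econv (u * H) F n) := by
  rw [econv_comm (u * H), econv, econv, econv, ← ENNReal.tsum_add, ← ENNReal.tsum_mul_left,
    ← ENNReal.tsum_mul_left]
  refine ENNReal.tsum_le_tsum fun m => ?_
  calc u n * (F m * H (n - m)) ≤ c * (u m + u (n - m)) * (F m * H (n - m)) := by
        gcongr
        simpa using hu m (n - m)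
    _ = _ := by simp only [Pi.mul_apply]; ring

theorem tsum_sq_mul_econv_le {u : G → ℝ≥0∞} {c : ℝ≥0∞} (hu : ∀ m k, u (m + k) ≤ c * (u m + u k))
    (F H : G → ℝ≥0∞) :
    ∑' n, (u n * econv F H n) ^ 2 ≤ 2 * c ^ 2 *
      ((∑' m, (u m * F m) ^ 2) * (∑' m, H m) ^ 2 + (∑' m, (u m * H m) ^ 2) * (∑' m, F m) ^ 2) := by
  calc ∑' n, (u n * econv F H n) ^ 2
      ≤ ∑' n, 2 * c ^ 2 * (econv (u * F) H n ^ 2 + econv (u * H) F n ^ 2) := by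
        refine ENNReal.tsum_le_tsum fun n => ?_
        calc (u n * econv F H n) ^ 2 ≤ (c * (econv (u * F) H n + econv (u * H) F n)) ^ 2 := by
              gcongr ?_ ^ 2
              exact mul_econv_le hu F H n
          _ ≤ _ := by
              rw [mul_pow, mul_comm 2, mul_assoc]
              gcongr
              exact ENNReal.add_sq_le _ _
    _ ≤ _ := by
        rw [ENNReal.tsum_mul_left, ENNReal.tsum_add]
        gcongr
        · exact tsum_sq_econv_le (u * F) H
        · exact tsum_sq_econv_le (u * H) F

end Convolution

section Lattice

variable {d : ℕ}

noncomputable def bracketSq (n : Fin d → ℤ) : ℝ≥0∞ :=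
  ENNReal.ofReal (1 + ∑ i, (n i : ℝ) ^ 2)

theorem one_le_bracketSq (n : Fin d → ℤ) : 1 ≤ bracketSq n :=
  ENNReal.one_le_ofReal.2 (le_add_of_nonneg_right (by positivity))

theorem bracketSq_ne_top (n : Fin d → ℤ) : bracketSq n ≠ ⊤ := ENNReal.ofReal_ne_top

theorem bracketSq_ne_zero (n : Fin d → ℤ) : bracketSq n ≠ 0 :=
  (zero_lt_one.trans_le (one_le_bracketSq n)).ne'

theorem bracketSq_add_le (m k : Fin d → ℤ) :
    bracketSq (m + k) ≤ 2 * (bracketSq m + bracketSq k) := by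
  rw [bracketSq, bracketSq, bracketSq, ← ENNReal.ofReal_add (by positivity) (by positivity),
    ← ENNReal.ofReal_ofNat 2, ← ENNReal.ofReal_mul zero_le_two]
  refine ENNReal.ofReal_le_ofReal ?_
  have hcoord : ∀ i, ((m + k) i : ℝ) ^ 2 ≤ 2 * (m i : ℝ) ^ 2 + 2 * (k i : ℝ) ^ 2 := fun i => by
    push_cast [Pi.add_apply]
    nlinarith [sq_nonneg ((m i : ℝ) - k i)]
  have := Finset.sum_le_sum fun i (_ : i ∈ Finset.univ) => hcoord i
  rw [Finset.sum_add_distrib, ← Finset.mul_sum, ← Finset.mul_sum] at this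
  linarith

theorem bracketSq_add_rpow_le {t : ℝ} (ht : 0 ≤ t) (m k : Fin d → ℤ) :
    bracketSq (m + k) ^ t ≤ 4 ^ t * (bracketSq m ^ t + bracketSq k ^ t) :=
  calc bracketSq (m + k) ^ t ≤ (2 * (bracketSq m + bracketSq k)) ^ t := by
        gcongr
        exact bracketSq_add_le m k
    _ = 2 ^ t * (bracketSq m + bracketSq k) ^ t := ENNReal.mul_rpow_of_nonneg _ _ ht
    _ ≤ 2 ^ t * (2 ^ t * (bracketSq m ^ t + bracketSq k ^ t)) := by
        gcongr
        exact ENNReal.add_rpow_le_two_rpow_mul_rpow_add_rpow _ _ ht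
    _ = 4 ^ t * (bracketSq m ^ t + bracketSq k ^ t) := by
        rw [← mul_assoc, ← ENNReal.mul_rpow_of_nonneg _ _ ht]
        norm_num

theorem tsum_int_one_add_sq_rpow_neg_lt_top {t : ℝ} (ht : 1 / 2 < t) :
    ∑' k : ℤ, ENNReal.ofReal (1 + (k : ℝ) ^ 2) ^ (-t) < ⊤ := by
  have hsummable : Summable fun k : ℤ => (1 + (k : ℝ) ^ 2) ^ (-t) := by
    refine Summable.of_norm_bounded_eventually
      (Real.summable_abs_int_rpow (b := 2 * t) (by linarith)) ?_
    filter_upwards [(Set.finite_singleton (0 : ℤ)).compl_mem_cofinite] with k hk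
    have hk : (0 : ℝ) < (k : ℝ) ^ 2 := by
      have : (k : ℝ) ≠ 0 := by exact_mod_cast hk
      positivity
    rw [Real.norm_of_nonneg (by positivity)]
    calc (1 + (k : ℝ) ^ 2) ^ (-t) ≤ ((k : ℝ) ^ 2) ^ (-t) :=
          Real.rpow_le_rpow_of_nonpos hk (by linarith) (by linarith)
      _ = |(k : ℝ)| ^ ((2 : ℕ) * -t) := by
          rw [← sq_abs, ← Real.rpow_natCast, ← Real.rpow_mul (abs_nonneg _)]
      _ = _ := by push_cast; ring_nf
  have hofReal : ∀ k : ℤ, ENNReal.ofReal (1 + (k : ℝ) ^ 2) ^ (-t) =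
      ENNReal.ofReal ((1 + (k : ℝ) ^ 2) ^ (-t)) := fun k =>
    ENNReal.ofReal_rpow_of_pos (by positivity)
  rw [tsum_congr hofReal]
  exact hsummable.tsum_ofReal_lt_top

theorem tsum_bracketSq_rpow_neg_lt_top [NeZero d] {s : ℝ} (hs : d / 2 < s) :
    ∑' n : Fin d → ℤ, bracketSq n ^ (-s) < ⊤ := by
  have hd : (0 : ℝ) < d := by exact_mod_cast Nat.pos_of_neZero d
  have hs₀ : 0 < s := by linarith
  have hcoord : ∀ (n : Fin d → ℤ) i, ENNReal.ofReal (1 + (n i : ℝ) ^ 2) ≤ bracketSq n :=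
    fun n i => ENNReal.ofReal_le_ofReal <| add_le_add_right
      (Finset.single_le_sum (f := fun j => (n j : ℝ) ^ 2) (fun _ _ => by positivity)
        (Finset.mem_univ i)) 1
  have hsplit : ∀ n : Fin d → ℤ, bracketSq n ^ (-s) = ∏ _i : Fin d, bracketSq n ^ (-(s / d)) := by
    intro n
    rw [Finset.prod_const, Finset.card_univ, Fintype.card_fin, ← ENNReal.rpow_natCast,
      ← ENNReal.rpow_mul]
    field_simp
  calc ∑' n : Fin d → ℤ, bracketSq n ^ (-s)
      ≤ ∑' n : Fin d → ℤ, ∏ i, ENNReal.ofReal (1 + (n i : ℝ) ^ 2) ^ (-(s / d)) := by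
        refine ENNReal.tsum_le_tsum fun n => ?_
        rw [hsplit]
        refine Finset.prod_le_prod' fun i _ => ?_
        rw [ENNReal.rpow_neg, ENNReal.rpow_neg]
        exact ENNReal.inv_le_inv.2 (ENNReal.rpow_le_rpow (hcoord n i) (by positivity))
    _ = (∑' k : ℤ, ENNReal.ofReal (1 + (k : ℝ) ^ 2) ^ (-(s / d))) ^ d := by
        rw [ENNReal.tsum_fin_pi_prod fun _ (k : ℤ) => ENNReal.ofReal (1 + (k : ℝ) ^ 2) ^ (-(s / d)),
          Finset.prod_const, Finset.card_univ, Fintype.card_fin]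
    _ < ⊤ := ENNReal.pow_lt_top (tsum_int_one_add_sq_rpow_neg_lt_top (by
        rw [lt_div_iff₀ hd]; linarith))

theorem sq_tsum_le_tsum_bracketSq_rpow_neg_mul (s : ℝ) (A : (Fin d → ℤ) → ℝ≥0∞) :
    (∑' n, A n) ^ 2 ≤ (∑' n : Fin d → ℤ, bracketSq n ^ (-s)) * ∑' n, bracketSq n ^ s * A n ^ 2 := by
  have hcancel : ∀ n : Fin d → ℤ, bracketSq n ^ (-s) * bracketSq n ^ s = 1 := fun n => by
    rw [← ENNReal.rpow_add _ _ (bracketSq_ne_zero n) (bracketSq_ne_top n), neg_add_cancel,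
      ENNReal.rpow_zero]
  have h := ENNReal.sq_tsum_mul_le (fun n => bracketSq n ^ (-s)) (fun n => bracketSq n ^ s * A n)
  have e1 : ∀ n, bracketSq n ^ (-s) * (bracketSq n ^ s * A n) = A n := fun n => by
    rw [← mul_assoc, hcancel, one_mul]
  have e2 : ∀ n, bracketSq n ^ (-s) * (bracketSq n ^ s * A n) ^ 2 = bracketSq n ^ s * A n ^ 2 :=
    fun n => by rw [mul_pow, ← mul_assoc, sq (bracketSq n ^ s), ← mul_assoc, hcancel, one_mul]
  simpa only [e1, e2] using h

end Lattice

theorem Ns_sq {E : Type*} [NormedAddCommGroup E] (s : ℝ) (a : (Fin 3 → ℤ) → E) :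
    Ns s a ^ 2 = ∑' n, bracketSq n ^ s * ‖a n‖ₑ ^ 2 := by
  rw [Ns, ← ENNReal.rpow_natCast, ← ENNReal.rpow_mul]
  norm_num
  refine tsum_congr fun n => ?_
  rw [ENNReal.ofReal_mul (by positivity), ← ENNReal.ofReal_rpow_of_pos (by positivity),
    ENNReal.ofReal_pow (norm_nonneg _), ofReal_norm, bracketSq]

theorem enorm_conv_le (a b : (Fin 3 → ℤ) → ℂ) (n : Fin 3 → ℤ) :
    ‖conv a b n‖ₑ ≤ econv (‖a ·‖ₑ) (‖b ·‖ₑ) n :=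
  enorm_tsum_le_tsum_enorm.trans_eq (tsum_congr fun _ => enorm_mul _ _)

theorem Ns_conv_sq_le {s : ℝ} (hs : 0 ≤ s) (t : ℝ) (a b : (Fin 3 → ℤ) → ℂ) :
    Ns s (conv a b) ^ 2 ≤ 2 * 4 ^ s * (∑' n : Fin 3 → ℤ, bracketSq n ^ (-t)) *
      (Ns s a ^ 2 * Ns t b ^ 2 + Ns t a ^ 2 * Ns s b ^ 2) := by
  set K := ∑' n : Fin 3 → ℤ, bracketSq n ^ (-t)
  set u : (Fin 3 → ℤ) → ℝ≥0∞ := fun n => bracketSq n ^ (s / 2)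
  have hu : ∀ m k, u (m + k) ≤ 4 ^ (s / 2) * (u m + u k) :=
    bracketSq_add_rpow_le (by positivity)
  have hNs : ∀ c : (Fin 3 → ℤ) → ℂ, Ns s c ^ 2 = ∑' n, (u n * ‖c n‖ₑ) ^ 2 := fun c => by
    rw [Ns_sq]
    refine tsum_congr fun n => ?_
    rw [mul_pow, ← ENNReal.rpow_natCast (u n), ← ENNReal.rpow_mul]
    norm_num
  have hl1 : ∀ c : (Fin 3 → ℤ) → ℂ, (∑' n, ‖c n‖ₑ) ^ 2 ≤ K * Ns t c ^ 2 := fun c => by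
    rw [Ns_sq]
    exact sq_tsum_le_tsum_bracketSq_rpow_neg_mul t _
  calc Ns s (conv a b) ^ 2 = ∑' n, (u n * ‖conv a b n‖ₑ) ^ 2 := hNs _
    _ ≤ ∑' n, (u n * econv (‖a ·‖ₑ) (‖b ·‖ₑ) n) ^ 2 :=
        ENNReal.tsum_le_tsum fun n => by grw [enorm_conv_le]
    _ ≤ 2 * (4 ^ (s / 2)) ^ 2 *
          (Ns s a ^ 2 * (∑' n, ‖b n‖ₑ) ^ 2 + Ns s b ^ 2 * (∑' n, ‖a n‖ₑ) ^ 2) := by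
        rw [hNs a, hNs b]
        exact tsum_sq_mul_econv_le hu _ _
    _ ≤ 2 * (4 ^ (s / 2)) ^ 2 *
          (Ns s a ^ 2 * (K * Ns t b ^ 2) + Ns s b ^ 2 * (K * Ns t a ^ 2)) := by
        grw [hl1 a, hl1 b]
    _ = _ := by
        rw [← ENNReal.rpow_natCast, ← ENNReal.rpow_mul]
        norm_num
        ring

theorem Ns_product_symmetric_general (δ : ℝ) (hδ0 : 0 < δ) :
    ∃ C : ℝ, 0 < C ∧ ∀ a b : (Fin 3 → ℤ) → ℂ,
      Ns (3 / 2 + δ) a < ⊤ → Ns (3 / 2 + δ) b < ⊤ →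
      Ns (1 / 2 + δ) (conv a b) ^ 2 ≤ ENNReal.ofReal C *
        (Ns (1 / 2 + δ) a ^ 2 * Ns (3 / 2 + δ) b ^ 2 +
          Ns (3 / 2 + δ) a ^ 2 * Ns (1 / 2 + δ) b ^ 2) := by
  set M := 2 * 4 ^ (1 / 2 + δ) * ∑' n : Fin 3 → ℤ, bracketSq n ^ (-(3 / 2 + δ))
  have hM : M ≠ ⊤ := ENNReal.mul_ne_top
    (ENNReal.mul_ne_top ENNReal.ofNat_ne_top
      (ENNReal.rpow_ne_top_of_nonneg (by linarith) ENNReal.ofNat_ne_top))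
    (tsum_bracketSq_rpow_neg_lt_top (by push_cast; linarith)).ne
  refine ⟨M.toReal + 1, by positivity, fun a b _ _ => ?_⟩
  calc _ ≤ M * _ := Ns_conv_sq_le (by linarith) _ a b
    _ ≤ _ := by
        gcongr
        rw [ENNReal.le_ofReal_iff_toReal_le hM (by positivity)]
        linarith

/-- Symmetric product estimate:
`N_{1/2+δ}(a*b)² ≤ C (N_{1/2+δ}(a)² N_{3/2+δ}(b)² + N_{3/2+δ}(a)² N_{1/2+δ}(b)²)`. -/
theorem Ns_product_symmetric (δ : ℝ) (hδ0 : 0 < δ) (hδ1 : δ < 1) :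
    ∃ C : ℝ, 0 < C ∧ ∀ a b : (Fin 3 → ℤ) → ℂ,
      Ns (3 / 2 + δ) a < ⊤ → Ns (3 / 2 + δ) b < ⊤ →
      Ns (1 / 2 + δ) (conv a b) ^ 2 ≤ ENNReal.ofReal C *
        (Ns (1 / 2 + δ) a ^ 2 * Ns (3 / 2 + δ) b ^ 2 +
          Ns (3 / 2 + δ) a ^ 2 * Ns (1 / 2 + δ) b ^ 2) :=
  Ns_product_symmetric_general δ hδ0
end
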